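/- Let Λ be a 3×3 real matrix whose singular values are all at most 1, and assume additionally that if some singular value of Λ equals 1 then t = 0 is forced (i.e., ‖Λr + t‖ ≤ 1 for all ‖r‖ ≤ 1). If the sum of the two smallest eigenvalues of M = (ΛΛᵀ + 5 t tᵀ)/2 equals 1, then t = 0 and ΛΛᵀ = I₃. -/

import Mathlib

/-!
Testing the ball condition at `±r` gives `‖Λr‖² + ‖t‖² ≤ 1` on the unit ball, hence
`ΛΛᵀ ≤ (1 - ‖t‖²) I`. On the plane `t⊥` the matrix `M` agrees with `ΛΛᵀ / 2`, and the span of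
any two orthonormal eigenvectors of `M` meets `t⊥`, so the two smallest eigenvalues of `M` are
each at most `(1 - ‖t‖²) / 2`. Their sum being `1` forces `t = 0` and both to equal `1/2`; the
largest is at most `1/2` because `ΛΛᵀ ≤ I`. So `M = I / 2`.
-/

open Matrix

/-- `μ` lists the eigenvalues of the real symmetric 3×3 matrix `M` in nonincreasing
order, via an orthogonal diagonalization `M = Oᵀ (diag μ) O`. -/
def EigOrdered (M : Matrix (Fin 3) (Fin 3) ℝ) (μ : Fin 3 → ℝ) : Prop :=
  (∃ O : Matrix (Fin 3) (Fin 3) ℝ, Oᵀ * O = 1 ∧ M = Oᵀ * Matrix.diagonal μ * O) ∧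
  μ 1 ≤ μ 0 ∧ μ 2 ≤ μ 1

section

variable {m n : Type*} [Fintype m] [Fintype n]

lemma sq_dotProduct_le (x y : n → ℝ) : (x ⬝ᵥ y) ^ 2 ≤ (x ⬝ᵥ x) * (y ⬝ᵥ y) := by
  simpa [dotProduct, sq] using Finset.sum_mul_sq_le_sq_mul_sq Finset.univ x y

lemma dotProduct_self_nonneg (x : n → ℝ) : 0 ≤ x ⬝ᵥ x := by
  simpa using dotProduct_self_star_nonneg x

lemma dotProduct_mul_transpose_mulVec (Λ : Matrix m n ℝ) (x : m → ℝ) :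
    x ⬝ᵥ (Λ * Λᵀ) *ᵥ x = Λᵀ *ᵥ x ⬝ᵥ Λᵀ *ᵥ x := by
  rw [← mulVec_mulVec, dotProduct_mulVec, ← mulVec_transpose]

/-- The parallelogram law applied to `Λr + t` and `-Λr + t`. -/
lemma mulVec_dotProduct_add_dotProduct_le_one {Λ : Matrix m n ℝ} {t : m → ℝ}
    (hcontr : ∀ r : n → ℝ, r ⬝ᵥ r ≤ 1 → (Λ *ᵥ r + t) ⬝ᵥ (Λ *ᵥ r + t) ≤ 1)
    {r : n → ℝ} (hr : r ⬝ᵥ r ≤ 1) :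
    Λ *ᵥ r ⬝ᵥ Λ *ᵥ r + t ⬝ᵥ t ≤ 1 := by
  have hplus := hcontr r hr
  have hminus := hcontr (-r) (by rwa [neg_dotProduct_neg])
  simp only [mulVec_neg, add_dotProduct, dotProduct_add, neg_dotProduct, dotProduct_neg,
    dotProduct_comm t] at hplus hminus
  linarith

lemma mulVec_dotProduct_le_of_unitBall {Λ : Matrix m n ℝ} {K : ℝ}
    (hK : ∀ r : n → ℝ, r ⬝ᵥ r ≤ 1 → Λ *ᵥ r ⬝ᵥ Λ *ᵥ r ≤ K) (r : n → ℝ) :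
    Λ *ᵥ r ⬝ᵥ Λ *ᵥ r ≤ K * (r ⬝ᵥ r) := by
  rcases (dotProduct_self_nonneg r).eq_or_lt with hr | hr
  · rw [← hr, (dotProduct_self_eq_zero.mp hr.symm)]
    simp
  set c := (√(r ⬝ᵥ r))⁻¹
  have hc : c ^ 2 = (r ⬝ᵥ r)⁻¹ := by rw [inv_pow, Real.sq_sqrt hr.le]
  have h := hK (c • r) (by simp [smul_dotProduct, dotProduct_smul, ← mul_assoc, ← sq, hc, hr.ne'])
  simp only [mulVec_smul, smul_dotProduct, dotProduct_smul, smul_eq_mul, ← mul_assoc, ← sq,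
    hc] at h
  rwa [inv_mul_le_iff₀ hr, mul_comm] at h

lemma transpose_mulVec_dotProduct_le {Λ : Matrix m n ℝ} {K : ℝ} (hK : 0 ≤ K)
    (hΛ : ∀ r : n → ℝ, Λ *ᵥ r ⬝ᵥ Λ *ᵥ r ≤ K * (r ⬝ᵥ r)) (x : m → ℝ) :
    Λᵀ *ᵥ x ⬝ᵥ Λᵀ *ᵥ x ≤ K * (x ⬝ᵥ x) := by
  set w := Λᵀ *ᵥ x
  have hw : x ⬝ᵥ Λ *ᵥ w = w ⬝ᵥ w := by rw [dotProduct_mulVec, ← mulVec_transpose]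
  have hcs : (w ⬝ᵥ w) ^ 2 ≤ (x ⬝ᵥ x) * (K * (w ⬝ᵥ w)) :=
    calc (w ⬝ᵥ w) ^ 2 = (x ⬝ᵥ Λ *ᵥ w) ^ 2 := by rw [hw]
      _ ≤ (x ⬝ᵥ x) * (Λ *ᵥ w ⬝ᵥ Λ *ᵥ w) := sq_dotProduct_le x _
      _ ≤ (x ⬝ᵥ x) * (K * (w ⬝ᵥ w)) :=
        mul_le_mul_of_nonneg_left (hΛ w) (dotProduct_self_nonneg x)
  rcases (dotProduct_self_nonneg w).eq_or_lt with hw0 | hw0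
  · rw [← hw0]
    exact mul_nonneg hK (dotProduct_self_nonneg x)
  · nlinarith

theorem dotProduct_mul_transpose_mulVec_le {Λ : Matrix m n ℝ} {t : m → ℝ}
    (hcontr : ∀ r : n → ℝ, r ⬝ᵥ r ≤ 1 → (Λ *ᵥ r + t) ⬝ᵥ (Λ *ᵥ r + t) ≤ 1) (x : m → ℝ) :
    x ⬝ᵥ (Λ * Λᵀ) *ᵥ x ≤ (1 - t ⬝ᵥ t) * (x ⬝ᵥ x) := by
  have hΛ r (hr : r ⬝ᵥ r ≤ 1) : Λ *ᵥ r ⬝ᵥ Λ *ᵥ r ≤ 1 - t ⬝ᵥ t := by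
    linarith [mulVec_dotProduct_add_dotProduct_le_one hcontr hr]
  have hT : 0 ≤ 1 - t ⬝ᵥ t := by simpa using hΛ 0 (by simp)
  rw [dotProduct_mul_transpose_mulVec]
  exact transpose_mulVec_dotProduct_le hT (mulVec_dotProduct_le_of_unitBall hΛ) x

lemma le_of_mulVec_eq_smul {A : Matrix n n ℝ} {u : n → ℝ} {a c : ℝ} (hu : u ⬝ᵥ u = 1)
    (hAu : A *ᵥ u = a • u) (hc : u ⬝ᵥ A *ᵥ u ≤ c * (u ⬝ᵥ u)) : a ≤ c := by
  simpa [hAu, hu] using hc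

/-- Some nonzero combination of `u` and `v` is orthogonal to `t`. -/
lemma min_le_of_dotProduct_mulVec_le_of_orthogonal {A : Matrix n n ℝ} {u v t : n → ℝ}
    {a b c : ℝ} (hu : u ⬝ᵥ u = 1) (hv : v ⬝ᵥ v = 1) (huv : u ⬝ᵥ v = 0)
    (hAu : A *ᵥ u = a • u) (hAv : A *ᵥ v = b • v)
    (hc : ∀ x, t ⬝ᵥ x = 0 → x ⬝ᵥ A *ᵥ x ≤ c * (x ⬝ᵥ x)) : min a b ≤ c := by
  set p := t ⬝ᵥ u
  set q := t ⬝ᵥ v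
  by_cases hpq : p = 0 ∧ q = 0
  · exact (min_le_left a b).trans (le_of_mulVec_eq_smul hu hAu (hc u hpq.1))
  have hpos : 0 < q ^ 2 + p ^ 2 := by
    rcases not_and_or.mp hpq with hp | hq <;> positivity
  set x := q • u - p • v
  have hvu : v ⬝ᵥ u = 0 := dotProduct_comm u v ▸ huv
  have hxx : x ⬝ᵥ x = q ^ 2 + p ^ 2 := by
    simp only [x, sub_dotProduct, dotProduct_sub, smul_dotProduct, dotProduct_smul, hu, hv, huv,
      hvu, smul_eq_mul]
    ring
  have htx : t ⬝ᵥ x = 0 := by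
    simp only [x, dotProduct_sub, dotProduct_smul, smul_eq_mul, p, q]
    ring
  have hxAx : x ⬝ᵥ A *ᵥ x = q ^ 2 * a + p ^ 2 * b := by
    simp only [x, mulVec_sub, mulVec_smul, hAu, hAv, sub_dotProduct, dotProduct_sub,
      smul_dotProduct, dotProduct_smul, hu, hv, huv, hvu, smul_eq_mul]
    ring
  have hmin : min a b * (q ^ 2 + p ^ 2) ≤ q ^ 2 * a + p ^ 2 * b := by
    nlinarith [min_le_left a b, min_le_right a b, sq_nonneg p, sq_nonneg q]
  have := hc x htx
  rw [hxAx, hxx] at this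
  exact le_of_mul_le_mul_right (hmin.trans this) hpos

end

section

variable {n : Type*} [Fintype n] [DecidableEq n]

lemma row_dotProduct_row_of_mul_transpose_eq_one {O : Matrix n n ℝ} (hO : O * Oᵀ = 1)
    (i j : n) : O i ⬝ᵥ O j = (1 : Matrix n n ℝ) i j := by
  rw [← hO]
  rfl

lemma mulVec_row_of_eq_transpose_mul_diagonal_mul {M O : Matrix n n ℝ} {μ : n → ℝ}
    (hO : O * Oᵀ = 1) (hM : M = Oᵀ * diagonal μ * O) (i : n) : M *ᵥ O i = μ i • O i := by
  have hrow : O i = Oᵀ *ᵥ Pi.single i 1 := by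
    rw [mulVec_single_one]
    rfl
  rw [hrow, hM, mulVec_mulVec, Matrix.mul_assoc, Matrix.mul_assoc, hO, Matrix.mul_one,
    ← mulVec_mulVec, diagonal_mulVec_single, ← smul_eq_mul, Pi.single_smul', mulVec_smul]

end

theorem stmt6_general (Λ : Matrix (Fin 3) (Fin 3) ℝ) (t : Fin 3 → ℝ)
    (hcontr : ∀ r : Fin 3 → ℝ, r ⬝ᵥ r ≤ 1 →
      (Λ.mulVec r + t) ⬝ᵥ (Λ.mulVec r + t) ≤ 1)
    (μ : Fin 3 → ℝ)
    (hμ : EigOrdered ((1/2 : ℝ) • (Λ * Λᵀ + (5 : ℝ) • vecMulVec t t)) μ)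
    (h1 : μ 1 + μ 2 = 1) :
    t = 0 ∧ Λ * Λᵀ = 1 := by
  obtain ⟨⟨O, hO, hM⟩, h10, h21⟩ := hμ
  have hOO : O * Oᵀ = 1 := mul_eq_one_comm.mp hO
  have horth := row_dotProduct_row_of_mul_transpose_eq_one hOO
  have heig := mulVec_row_of_eq_transpose_mul_diagonal_mul hOO hM
  have hquad (x : Fin 3 → ℝ) (htx : t ⬝ᵥ x = 0) :
      x ⬝ᵥ ((1/2 : ℝ) • (Λ * Λᵀ + (5 : ℝ) • vecMulVec t t)) *ᵥ x
        ≤ (1 - t ⬝ᵥ t) / 2 * (x ⬝ᵥ x) := by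
    have := dotProduct_mul_transpose_mulVec_le hcontr x
    simp only [smul_mulVec, add_mulVec, vecMulVec_mulVec, htx, MulOpposite.op_zero, zero_smul,
      smul_zero, add_zero, dotProduct_smul, smul_eq_mul]
    linarith
  have hpair (i j : Fin 3) (hij : i ≠ j) : min (μ i) (μ j) ≤ (1 - t ⬝ᵥ t) / 2 :=
    min_le_of_dotProduct_mulVec_le_of_orthogonal (by simp [horth]) (by simp [horth])
      (by simp [horth, hij]) (heig i) (heig j) hquad
  have hμ1 : μ 1 ≤ (1 - t ⬝ᵥ t) / 2 := min_eq_right h10 ▸ hpair 0 1 (by decide)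
  have hμ2 : μ 2 ≤ (1 - t ⬝ᵥ t) / 2 := min_eq_right h21 ▸ hpair 1 2 (by decide)
  have ht : t = 0 :=
    dotProduct_self_eq_zero.mp (by linarith [dotProduct_self_nonneg t])
  have hμ0 : μ 0 ≤ 1 / 2 := by
    simpa [ht] using le_of_mulVec_eq_smul (by simp [horth]) (heig 0) (hquad (O 0) (by simp [ht]))
  have hμ : μ = fun _ ↦ 1 / 2 := by
    funext i
    fin_cases i <;> simp <;> linarith
  rw [hμ, ← smul_one_eq_diagonal, ht, vecMulVec_zero, smul_zero, add_zero, Matrix.mul_smul,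
    Matrix.mul_one, Matrix.smul_mul, hO] at hM
  exact ⟨ht, smul_right_injective _ (by norm_num) hM⟩

/-- If the singular values of `Λ` are all at most 1 and the affine map
`r ↦ Λr + t` maps the closed unit ball into itself, and if the sum of the two
smallest eigenvalues of `M = (ΛΛᵀ + 5ttᵀ)/2` equals 1, then `t = 0` and
`ΛΛᵀ = I₃` (the channel is unitary). -/
theorem stmt6 (Λ : Matrix (Fin 3) (Fin 3) ℝ) (t : Fin 3 → ℝ)
    (hsing : ∀ x : Fin 3 → ℝ, x ⬝ᵥ (Λ * Λᵀ).mulVec x ≤ x ⬝ᵥ x)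
    (hcontr : ∀ r : Fin 3 → ℝ, r ⬝ᵥ r ≤ 1 →
      (Λ.mulVec r + t) ⬝ᵥ (Λ.mulVec r + t) ≤ 1)
    (μ : Fin 3 → ℝ)
    (hμ : EigOrdered ((1/2 : ℝ) • (Λ * Λᵀ + (5 : ℝ) • vecMulVec t t)) μ)
    (h1 : μ 1 + μ 2 = 1) :
    t = 0 ∧ Λ * Λᵀ = 1 :=
  stmt6_general Λ t hcontr μ hμ h1
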